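/- arXiv:math/0312261 — 2 statements merged into one kernel-verified Lean document; each statement's English description precedes it below -/
import Mathlib

section
/- Let Y be a locally compact Hausdorff topological space and S a unital C*-subalgebra of C_b(Y;ℂ) containing C₀(Y;ℂ) and separating points. Then the evaluation map ev : Y → characterSpace(S) is a topological embedding with dense image, i.e., characterSpace(S) is a compactification of Y. -/
set_option synthInstance.maxHeartbeats 1000000
set_option maxHeartbeats 2000000

open WeakDual

/-- For a locally compact Hausdorff space `Y` and a closed unital C*-subalgebra
`S` of `C_b(Y;ℂ)` containing `C₀(Y;ℂ)` and separating points, the evaluation map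
`ev : Y → characterSpace(S)` is a topological embedding with dense range, i.e. the character
space of `S` is a compactification of `Y`. -/
theorem stmt_6 (Y : Type*) [TopologicalSpace Y] [LocallyCompactSpace Y] [T2Space Y]
    (S : StarSubalgebra ℂ (BoundedContinuousFunction Y ℂ))
    (hS_closed : IsClosed (S : Set (BoundedContinuousFunction Y ℂ)))
    (hS_zero : ∀ f : ZeroAtInftyContinuousMap Y ℂ, f.toBCF ∈ S)
    (hS_sep : ∀ x y : Y, x ≠ y → ∃ f ∈ S, f x ≠ f y) :
    ∃ ev : Y → characterSpace ℂ S,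
      (∀ (y : Y) (f : S), (ev y : WeakDual ℂ S) f = (f : BoundedContinuousFunction Y ℂ) y) ∧
      Topology.IsEmbedding ev ∧ DenseRange ev := by
  haveI : CompleteSpace S := hS_closed.completeSpace_coe
  -- the evaluation algebra homomorphism
  let evA : Y → (S →ₐ[ℂ] ℂ) := fun y =>
    { toFun := fun f => (f : BoundedContinuousFunction Y ℂ) y
      map_one' := rfl
      map_mul' := fun f g => rfl
      map_zero' := rfl
      map_add' := fun f g => rfl
      commutes' := fun c => rfl }
  let ev : Y → characterSpace ℂ S := fun y => CharacterSpace.equivAlgHom.symm (evA y)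
  have hev : ∀ (y : Y) (f : S),
      (ev y : WeakDual ℂ S) f = (f : BoundedContinuousFunction Y ℂ) y := fun y f => rfl
  -- injectivity
  have hinj : Function.Injective ev := by
    intro x y hxy
    by_contra hne
    obtain ⟨f, hfS, hf⟩ := hS_sep x y hne
    have := congrArg (fun χ : characterSpace ℂ S => (χ : WeakDual ℂ S) ⟨f, hfS⟩) hxy
    exact hf this
  -- continuity
  have hcont : Continuous ev := by
    apply Continuous.subtype_mk
    apply WeakBilin.continuous_of_continuous_eval
    intro f
    exact (f : BoundedContinuousFunction Y ℂ).continuous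
  -- inducing via C₀ bump functions
  have hind : Topology.IsInducing ev := by
    rw [Topology.isInducing_iff_nhds]
    intro y
    refine le_antisymm (Filter.tendsto_iff_comap.mp hcont.continuousAt) ?_
    intro U hU
    obtain ⟨V, hVU, hVopen, hyV⟩ := mem_nhds_iff.mp hU
    obtain ⟨f, hf1, hf0, hfc, -⟩ :=
      exists_continuous_one_zero_of_isCompact (isCompact_singleton (x := y))
        hVopen.isClosed_compl (by simpa using hyV)
    -- complexify f, compactly supported, hence zero at infinity
    have hcsC : HasCompactSupport (fun x => (f x : ℂ)) := by
      show HasCompactSupport (Complex.ofReal ∘ f)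
      exact hfc.comp_left (by simp)
    let g : ZeroAtInftyContinuousMap Y ℂ :=
      ⟨⟨fun x => (f x : ℂ), Complex.continuous_ofReal.comp f.continuous⟩,
        hcsC.is_zero_at_infty⟩
    let fS : S := ⟨g.toBCF, hS_zero g⟩
    have hopen : IsOpen {χ : characterSpace ℂ S | ‖(χ : WeakDual ℂ S) fS - 1‖ < 1} := by
      have hc : Continuous fun χ : characterSpace ℂ S =>
          ‖(χ : WeakDual ℂ S) fS - 1‖ :=
        (((WeakDual.eval_continuous (𝕜 := ℂ) (E := S) fS).comp
          continuous_subtype_val).sub continuous_const).norm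
      exact isOpen_lt hc continuous_const
    refine Filter.mem_of_superset
      (Filter.preimage_mem_comap (hopen.mem_nhds ?_)) ?_
    · show ‖(ev y : WeakDual ℂ S) fS - 1‖ < 1
      rw [hev]
      have : (fS : BoundedContinuousFunction Y ℂ) y = (f y : ℂ) := rfl
      rw [this, hf1 (Set.mem_singleton y)]
      simp
    · intro z hz
      simp only [Set.mem_preimage, Set.mem_setOf_eq, hev] at hz
      have hz' : (f z : ℂ) ≠ 0 := by
        intro h
        have : (fS : BoundedContinuousFunction Y ℂ) z = (f z : ℂ) := rfl
        rw [this, h] at hz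
        simp at hz
      have : z ∈ V := by
        by_contra hzV
        exact hz' (by simpa using congrArg Complex.ofReal (hf0 hzV))
      exact hVU this
  refine ⟨ev, hev, ⟨hind, hinj⟩, ?_⟩
  -- density via Gelfand transform
  letI : CommCStarAlgebra S := StarSubalgebra.commCStarAlgebra S
  by_contra hdense
  rw [DenseRange, dense_iff_closure_eq, ← Ne, ← Set.ssubset_univ_iff] at hdense
  obtain ⟨χ, -, hχ⟩ := Set.exists_of_ssubset hdense
  obtain ⟨g, hg0, hg1, -⟩ :=
    exists_continuous_zero_one_of_isClosed isClosed_closure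
      (isClosed_singleton (x := χ)) (by simpa [Set.disjoint_singleton_right] using hχ)
  let gC : C(characterSpace ℂ S, ℂ) :=
    ⟨fun φ => (g φ : ℂ), Complex.continuous_ofReal.comp g.continuous⟩
  obtain ⟨f, hf⟩ := (gelfandTransform_bijective S).2 gC
  have hfy : ∀ y : Y, (f : BoundedContinuousFunction Y ℂ) y = 0 := by
    intro y
    have h1 : gelfandTransform ℂ S f (ev y) = (g (ev y) : ℂ) := by rw [hf]; rfl
    have h2 : gelfandTransform ℂ S f (ev y) = (ev y : WeakDual ℂ S) f := rfl
    rw [hev] at h2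
    rw [h2] at h1
    rw [h1, hg0 (subset_closure (Set.mem_range_self y))]
    simp
  have hf0 : f = 0 := by
    apply Subtype.ext
    ext y
    simpa using hfy y
  have : gC χ = 0 := by rw [← hf, hf0]; simp
  have h1 : gC χ = 1 := by
    simp only [gC, ContinuousMap.coe_mk, hg1 (Set.mem_singleton χ)]
    norm_num
  rw [this] at h1
  exact zero_ne_one h1
end

section
/- Let Y be a locally compact Hausdorff space, S a unital C*-subalgebra of C_b(Y;ℂ) containing C₀(Y;ℂ), M its character space regarded as a compactification of Y, and M_h = M \ ev(Y). Suppose there is a continuous proper function ρ : Y → [0,∞) (e.g. ρ(v) = |v|′ on T*X). Then for every a ∈ S: sup{|m(a)| : m ∈ M_h} = lim_{R→∞} sup{|a(y)| : y ∈ Y, ρ(y) > R}. -/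
set_option synthInstance.maxHeartbeats 1000000
set_option maxHeartbeats 2000000

open WeakDual Filter
open Topology BoundedContinuousFunction


private lemma char_norm_le {Y : Type*} [TopologicalSpace Y] [Nonempty Y]
    {S : StarSubalgebra ℂ (BoundedContinuousFunction Y ℂ)}
    (hS_closed : IsClosed (S : Set (BoundedContinuousFunction Y ℂ)))
    (m : characterSpace ℂ S) (x : S) :
    ‖m x‖ ≤ ‖(x : BoundedContinuousFunction Y ℂ)‖ := by
  haveI : CompleteSpace S := hS_closed.completeSpace_coe
  haveI : NormOneClass S :=
    ⟨by rw [show ‖(1 : S)‖ = ‖((1 : S) : BoundedContinuousFunction Y ℂ)‖ from rfl,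
      OneMemClass.coe_one, norm_one]⟩
  have h1 : ‖m x‖ ≤ ‖x‖ :=
    spectrum.norm_le_norm_of_mem (WeakDual.CharacterSpace.apply_mem_spectrum m x)
  exact h1

private lemma char_kills_c0 {Y : Type*} [TopologicalSpace Y] [T2Space Y]
    {S : StarSubalgebra ℂ (BoundedContinuousFunction Y ℂ)}
    (hS_closed : IsClosed (S : Set (BoundedContinuousFunction Y ℂ)))
    (hS_zero : ∀ f : ZeroAtInftyContinuousMap Y ℂ, f.toBCF ∈ S)
    {ev : Y → characterSpace ℂ S}
    (hev : ∀ (y : Y) (f : S), (ev y : WeakDual ℂ S) f = (f : BoundedContinuousFunction Y ℂ) y)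
    {m : characterSpace ℂ S} (hm : m ∉ Set.range ev)
    (g : ZeroAtInftyContinuousMap Y ℂ) :
    (m : WeakDual ℂ S) ⟨g.toBCF, hS_zero g⟩ = 0 := by
  classical
  have hev' : ∀ (y : Y) (f : S), ev y f = (f : BoundedContinuousFunction Y ℂ) y := hev
  show m ⟨g.toBCF, hS_zero g⟩ = 0
  rcases isEmpty_or_nonempty Y with hY | hY
  · have hz : (⟨g.toBCF, hS_zero g⟩ : S) = 0 := by
      ext y; exact isEmptyElim y
    rw [hz, map_zero]
  by_contra hζ
  haveI : CompleteSpace S := hS_closed.completeSpace_coe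
  set gS : S := ⟨g.toBCF, hS_zero g⟩ with hgS
  set ζ : ℂ := m gS with hzeta
  obtain ⟨g1, hmg1, hg1y⟩ : ∃ g1 : S, m g1 = 1 ∧
      ∀ y, (g1 : BoundedContinuousFunction Y ℂ) y = ζ⁻¹ * g y := by
    refine ⟨ζ⁻¹ • gS, ?_, ?_⟩
    · rw [map_smul, smul_eq_mul, ← hzeta, inv_mul_cancel₀ hζ]
    · intro y; simp [hgS]
  -- the compact set K
  set K : Set Y := {y | 1/2 ≤ ‖(g1 : BoundedContinuousFunction Y ℂ) y‖} with hKdef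
  have hg1cont : Continuous fun y => ‖(g1 : BoundedContinuousFunction Y ℂ) y‖ :=
    continuous_norm.comp (g1 : BoundedContinuousFunction Y ℂ).continuous
  have hKclosed : IsClosed K := isClosed_le continuous_const hg1cont
  have hzero : Tendsto (fun y => (g1 : BoundedContinuousFunction Y ℂ) y) (cocompact Y) (𝓝 0) := by
    have h0 : Tendsto (fun y => ζ⁻¹ * g y) (cocompact Y) (𝓝 0) := by
      simpa using (zero_at_infty g).const_mul ζ⁻¹
    exact h0.congr fun y => (hg1y y).symm
  have hKcomp : IsCompact K := by
    have hball : (fun y => (g1 : BoundedContinuousFunction Y ℂ) y) ⁻¹' Metric.ball 0 (1/2)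
        ∈ cocompact Y := hzero (Metric.ball_mem_nhds (0:ℂ) (by norm_num))
    rw [mem_cocompact] at hball
    obtain ⟨C, hCcomp, hCsub⟩ := hball
    refine hCcomp.of_isClosed_subset hKclosed fun y hy => ?_
    by_contra hyC
    have h2 := hCsub hyC
    rw [Set.mem_preimage, Metric.mem_ball, Complex.dist_eq, sub_zero] at h2
    have h3 : (1:ℝ)/2 ≤ ‖(g1 : BoundedContinuousFunction Y ℂ) y‖ := hy
    linarith
  -- K is nonempty
  have hKne : K.Nonempty := by
    by_contra hemp
    rw [Set.not_nonempty_iff_eq_empty] at hemp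
    have hb : ‖(g1 : BoundedContinuousFunction Y ℂ)‖ ≤ 1/2 := by
      apply (norm_le (by norm_num : (0:ℝ) ≤ 1/2)).mpr
      intro y
      by_contra hc
      have : y ∈ K := le_of_lt (not_le.mp hc)
      rw [hemp] at this
      exact this
    have h1 := char_norm_le hS_closed m g1
    rw [hmg1] at h1
    simp only [norm_one] at h1
    linarith
  -- step 1 : separating elements
  have step1 : ∀ y : Y, ∃ b : S, m b = 0 ∧ (b : BoundedContinuousFunction Y ℂ) y ≠ 0 := by
    intro y
    have hne : ∃ f : S, m f ≠ (f : BoundedContinuousFunction Y ℂ) y := by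
      by_contra hcon
      push_neg at hcon
      exact hm ⟨y, Subtype.ext (ContinuousLinearMap.ext fun f =>
        (hev y f).trans (hcon f).symm)⟩
    obtain ⟨f, hf⟩ := hne
    refine ⟨f - m f • 1, ?_, ?_⟩
    · rw [map_sub, map_smul, map_one, smul_eq_mul, mul_one, sub_self]
    · have hval : ((f - m f • 1 : S) : BoundedContinuousFunction Y ℂ) y
          = (f : BoundedContinuousFunction Y ℂ) y - m f := by simp
      rw [hval, sub_ne_zero]
      exact fun hcon => hf hcon.symm
  choose b hb0 hbne using step1
  -- "positive" elements killed by m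
  have hc0 : ∀ y, m (star (b y) * b y) = 0 := by
    intro y; rw [map_mul, hb0, mul_zero]
  have hcval : ∀ y y', ((star (b y) * b y : S) : BoundedContinuousFunction Y ℂ) y'
      = (Complex.normSq ((b y : BoundedContinuousFunction Y ℂ) y') : ℂ) := by
    intro y y'
    simp only [MulMemClass.coe_mul]
    rw [BoundedContinuousFunction.mul_apply]
    have hstar : ((star (b y) : S) : BoundedContinuousFunction Y ℂ) y'
        = starRingEnd ℂ ((b y : BoundedContinuousFunction Y ℂ) y') := by simp
    rw [hstar, ← Complex.normSq_eq_conj_mul_self]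
  -- finite subcover
  have hcover : K ⊆ ⋃ y ∈ K, {y' | 0 < Complex.normSq ((b y : BoundedContinuousFunction Y ℂ) y')} := by
    intro y hy
    refine Set.mem_biUnion hy ?_
    show 0 < Complex.normSq ((b y : BoundedContinuousFunction Y ℂ) y)
    exact Complex.normSq_pos.mpr (hbne y)
  obtain ⟨t, htK, htfin, htcov⟩ := hKcomp.elim_finite_subcover_image
    (fun y _ => isOpen_lt continuous_const
      (Complex.continuous_normSq.comp (b y : BoundedContinuousFunction Y ℂ).continuous)) hcover
  obtain ⟨h, H, hmh, hHval, hH0, hHK⟩ :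
      ∃ (h : S) (H : Y → ℝ), m h = 0 ∧
        (∀ y', (h : BoundedContinuousFunction Y ℂ) y' = (H y' : ℂ)) ∧
        (∀ y', 0 ≤ H y') ∧ ((∀ y' ∈ K, 0 < H y') ∧ Continuous H) := by
    refine ⟨∑ y ∈ htfin.toFinset, star (b y) * b y,
      fun y' => ∑ y ∈ htfin.toFinset, Complex.normSq ((b y : BoundedContinuousFunction Y ℂ) y'),
      ?_, ?_, ?_, ?_, ?_⟩
    · rw [map_sum]
      exact Finset.sum_eq_zero fun y _ => hc0 y
    · intro y'
      rw [show ((∑ y ∈ htfin.toFinset, star (b y) * b y : S) : BoundedContinuousFunction Y ℂ)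
        = ∑ y ∈ htfin.toFinset, ((star (b y) * b y : S) : BoundedContinuousFunction Y ℂ)
        from AddSubmonoidClass.coe_finset_sum _ _]
      rw [BoundedContinuousFunction.coe_sum]
      push_cast
      simp only [Finset.sum_apply]
      exact Finset.sum_congr rfl fun y _ => hcval y y'
    · exact fun y' => Finset.sum_nonneg fun y _ => Complex.normSq_nonneg _
    · intro y' hy'
      obtain ⟨y₀, hy₀t, hy₀⟩ := Set.mem_iUnion₂.mp (htcov hy')
      refine Finset.sum_pos' (fun y _ => Complex.normSq_nonneg _) ⟨y₀, ?_, hy₀⟩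
      rw [Set.Finite.mem_toFinset]
      exact hy₀t
    · exact continuous_finset_sum _ fun y _ =>
        Complex.continuous_normSq.comp (b y : BoundedContinuousFunction Y ℂ).continuous
  obtain ⟨hHK, hHcont⟩ := hHK
  -- minimum on K
  obtain ⟨ymin, hyminK, hymin⟩ := hKcomp.exists_isMinOn hKne hHcont.continuousOn
  set δ : ℝ := H ymin with hδdef
  have hδpos : 0 < δ := hHK ymin hyminK
  have hδle : ∀ y' ∈ K, δ ≤ H y' := fun y' hy' => hymin hy'
  -- scaling
  set nh : ℝ := ‖(h : BoundedContinuousFunction Y ℂ)‖ with hnhdef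
  have hnh0 : 0 ≤ nh := norm_nonneg _
  have hHle : ∀ y', H y' ≤ nh := by
    intro y'
    have h1 := norm_coe_le_norm (h : BoundedContinuousFunction Y ℂ) y'
    rw [hHval y', Complex.norm_real, Real.norm_eq_abs, abs_of_nonneg (hH0 y')] at h1
    exact h1
  set s : ℝ := (nh + 1)⁻¹ with hsdef
  have hspos : 0 < s := by rw [hsdef]; positivity
  have hsH1 : ∀ y', s * H y' < 1 := by
    intro y'
    have h1 : H y' ≤ nh := hHle y'
    have h2 : s * H y' ≤ s * nh := mul_le_mul_of_nonneg_left h1 hspos.le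
    have h3 : s * nh < 1 := by
      rw [hsdef, inv_mul_lt_iff₀ (by linarith)]
      linarith
    linarith
  have hsH0 : ∀ y', 0 ≤ s * H y' := fun y' => mul_nonneg hspos.le (hH0 y')
  set r : ℝ := 1 - s * δ with hrdef
  have hr0 : 0 ≤ r := by
    have := hsH1 ymin
    rw [hrdef, hδdef]
    linarith
  have hr1 : r < 1 := by
    rw [hrdef]
    have := mul_pos hspos hδpos
    linarith
  set Mg : ℝ := ‖(g1 : BoundedContinuousFunction Y ℂ)‖ with hMgdef
  have hMg0 : 0 ≤ Mg := norm_nonneg _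
  obtain ⟨n, hn⟩ := exists_pow_lt_of_lt_one
    (show (0:ℝ) < (1/2)/(Mg + 1) by positivity) hr1
  have hMgr : Mg * r ^ n < 1/2 := by
    have h1 : Mg * r ^ n ≤ (Mg + 1) * r ^ n :=
      mul_le_mul_of_nonneg_right (by linarith) (pow_nonneg hr0 n)
    have h2 : (Mg + 1) * r ^ n < (Mg + 1) * ((1/2)/(Mg + 1)) :=
      mul_lt_mul_of_pos_left hn (by positivity)
    have h3 : (Mg + 1) * ((1/2)/(Mg + 1)) = 1/2 := by
      field_simp
    linarith
  -- the contradiction element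
  obtain ⟨x, hmx, hxval⟩ : ∃ x : S, m x = 1 ∧
      ∀ y', (x : BoundedContinuousFunction Y ℂ) y'
        = (g1 : BoundedContinuousFunction Y ℂ) y' * ((1 : ℂ) - (s : ℂ) * (H y' : ℂ)) ^ n := by
    refine ⟨g1 * ((1 : S) - (s : ℂ) • h) ^ n, ?_, ?_⟩
    · rw [map_mul, map_pow, map_sub, map_one, map_smul, hmh, hmg1, smul_zero, sub_zero, one_pow,
        one_mul]
    · intro y'
      simp only [MulMemClass.coe_mul, SubmonoidClass.coe_pow, AddSubgroupClass.coe_sub,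
        SetLike.val_smul, OneMemClass.coe_one]
      rw [BoundedContinuousFunction.mul_apply]
      congr 1
      rw [BoundedContinuousFunction.coe_pow]
      simp only [Pi.pow_apply]
      congr 1
      rw [BoundedContinuousFunction.sub_apply, BoundedContinuousFunction.smul_apply]
      rw [hHval y']
      simp [smul_eq_mul]
  have hfactor : ∀ y', ‖(1 : ℂ) - (s : ℂ) * (H y' : ℂ)‖ = 1 - s * H y' := by
    intro y'
    have hcast : (1 : ℂ) - (s : ℂ) * (H y' : ℂ) = ((1 - s * H y' : ℝ) : ℂ) := by push_cast; ring
    rw [hcast, Complex.norm_real, Real.norm_eq_abs, abs_of_nonneg (by linarith [hsH1 y'])]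
  have hxnorm : ‖(x : BoundedContinuousFunction Y ℂ)‖ ≤ 1/2 := by
    apply (norm_le (by norm_num : (0:ℝ) ≤ 1/2)).mpr
    intro y'
    rw [hxval y', norm_mul, norm_pow, hfactor y']
    by_cases hyK : y' ∈ K
    · have h1 : ‖(g1 : BoundedContinuousFunction Y ℂ) y'‖ ≤ Mg := norm_coe_le_norm _ _
      have h2 : 1 - s * H y' ≤ r := by
        rw [hrdef]
        have := hδle y' hyK
        nlinarith [hspos]
      have h3 : (1 - s * H y') ^ n ≤ r ^ n :=
        pow_le_pow_left₀ (by linarith [hsH1 y']) h2 n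
      calc ‖(g1 : BoundedContinuousFunction Y ℂ) y'‖ * (1 - s * H y') ^ n
          ≤ Mg * r ^ n :=
            mul_le_mul h1 h3 (pow_nonneg (by linarith [hsH1 y']) n) hMg0
        _ ≤ 1/2 := hMgr.le
    · have h1 : ‖(g1 : BoundedContinuousFunction Y ℂ) y'‖ < 1/2 := by
        exact not_le.mp (fun hc => hyK hc)
      have h2 : (1 - s * H y') ^ n ≤ 1 :=
        pow_le_one₀ (by linarith [hsH1 y']) (by linarith [hsH0 y'])
      calc ‖(g1 : BoundedContinuousFunction Y ℂ) y'‖ * (1 - s * H y') ^ n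
          ≤ (1/2) * 1 :=
            mul_le_mul h1.le h2 (pow_nonneg (by linarith [hsH1 y']) n) (by norm_num)
        _ = 1/2 := by ring
  have hfinal := char_norm_le hS_closed m x
  rw [hmx] at hfinal
  simp only [norm_one] at hfinal
  linarith [le_trans hfinal hxnorm]


private lemma exists_c0_one_on {Y : Type*} [TopologicalSpace Y] [LocallyCompactSpace Y]
    [T2Space Y] {K : Set Y} (hK : IsCompact K) :
    ∃ g : ZeroAtInftyContinuousMap Y ℂ, (∀ y ∈ K, g y = 1) ∧
      (∀ y, ‖1 - g y‖ ≤ 1) ∧ HasCompactSupport (⇑g) := by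
  obtain ⟨χ, hχ1, hχ0, hχsupp, hχmem⟩ :=
    exists_continuous_one_zero_of_isCompact hK isClosed_empty (by simp)
  have hsupp : HasCompactSupport fun y => ((χ y : ℝ) : ℂ) := by
    have : HasCompactSupport (Complex.ofReal ∘ ⇑χ) := hχsupp.comp_left Complex.ofReal_zero
    exact this
  refine ⟨⟨⟨fun y => ((χ y : ℝ) : ℂ), Complex.continuous_ofReal.comp χ.continuous⟩,
    hsupp.is_zero_at_infty⟩, ?_, ?_, ?_⟩
  · intro y hy
    show ((χ y : ℝ) : ℂ) = 1
    rw [hχ1 hy]; norm_num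
  · intro y
    show ‖1 - ((χ y : ℝ) : ℂ)‖ ≤ 1
    have hcast : (1 : ℂ) - ((χ y : ℝ) : ℂ) = ((1 - χ y : ℝ) : ℂ) := by push_cast; ring
    rw [hcast, Complex.norm_real, Real.norm_eq_abs, abs_of_nonneg (by linarith [(hχmem y).2])]
    linarith [(hχmem y).1]
  · exact hsupp

/-- With `Y` locally compact Hausdorff, `S` a closed unital C*-subalgebra of
`C_b(Y;ℂ)` containing `C₀(Y;ℂ)`, `M` its character space regarded as a compactification of `Y`
via the evaluation embedding `ev`, `M_h = M \ ev(Y)`, and `ρ : Y → [0,∞)` continuous and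
proper, then for every `a ∈ S`:
`sup{|m(a)| : m ∈ M_h} = lim_{R→∞} sup{|a(y)| : ρ(y) > R}`. -/
theorem stmt_8 (Y : Type*) [TopologicalSpace Y] [LocallyCompactSpace Y] [T2Space Y]
    (S : StarSubalgebra ℂ (BoundedContinuousFunction Y ℂ))
    (hS_closed : IsClosed (S : Set (BoundedContinuousFunction Y ℂ)))
    (hS_zero : ∀ f : ZeroAtInftyContinuousMap Y ℂ, f.toBCF ∈ S)
    (ev : Y → characterSpace ℂ S)
    (hev : ∀ (y : Y) (f : S), (ev y : WeakDual ℂ S) f = (f : BoundedContinuousFunction Y ℂ) y)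
    (ρ : Y → ℝ) (hρ_nonneg : ∀ y, 0 ≤ ρ y) (hρ_proper : IsProperMap ρ) :
    ∀ a : S,
      Tendsto
        (fun R : ℝ => sSup {x : ℝ | ∃ y : Y, ρ y > R ∧
          ‖(a : BoundedContinuousFunction Y ℂ) y‖ = x})
        atTop
        (nhds (sSup {x : ℝ | ∃ m : characterSpace ℂ S, m ∉ Set.range ev ∧
          ‖(m : WeakDual ℂ S) a‖ = x})) := by
  intro a
  classical
  set SR : ℝ → Set ℝ := fun R => {x : ℝ | ∃ y : Y, ρ y > R ∧
    ‖(a : BoundedContinuousFunction Y ℂ) y‖ = x} with hSRdef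
  set SL : Set ℝ := {x : ℝ | ∃ m : characterSpace ℂ S, m ∉ Set.range ev ∧
    ‖(m : WeakDual ℂ S) a‖ = x} with hSLdef
  rcases isEmpty_or_nonempty Y with hY | hY
  · -- degenerate case : Y is empty
    haveI : Subsingleton S := ⟨fun x y => Subtype.ext (by ext z; exact isEmptyElim z)⟩
    have hcharEmpty : ∀ m : characterSpace ℂ S, False := by
      intro m
      have h1 : (1 : ℂ) = 0 := by
        rw [← map_one m, Subsingleton.elim (1 : S) 0, map_zero]
      exact one_ne_zero h1
    have hSR : ∀ R : ℝ, SR R = ∅ := by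
      intro R
      rw [Set.eq_empty_iff_forall_notMem]
      rintro x ⟨y, -⟩
      exact isEmptyElim y
    have hSL : SL = ∅ := by
      rw [Set.eq_empty_iff_forall_notMem]
      rintro x ⟨m, -⟩
      exact hcharEmpty m
    have heq : (fun R => sSup (SR R)) = fun _ => (0 : ℝ) := by
      funext R; rw [hSR R, Real.sSup_empty]
    rw [heq, hSL, Real.sSup_empty]
    exact tendsto_const_nhds
  -- main case : Y nonempty
  haveI : CompleteSpace S := hS_closed.completeSpace_coe
  -- basic facts on the sets
  have hbddR : ∀ R, BddAbove (SR R) := by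
    intro R
    refine ⟨‖(a : BoundedContinuousFunction Y ℂ)‖, ?_⟩
    rintro x ⟨y, -, rfl⟩
    exact norm_coe_le_norm _ y
  have hbddL : BddAbove SL := by
    refine ⟨‖(a : BoundedContinuousFunction Y ℂ)‖, ?_⟩
    rintro x ⟨m, -, rfl⟩
    exact char_norm_le hS_closed m a
  have hSR0 : ∀ R, 0 ≤ sSup (SR R) := by
    intro R
    apply Real.sSup_nonneg
    rintro x ⟨y, -, rfl⟩
    exact norm_nonneg _
  have hSL0 : 0 ≤ sSup SL := by
    apply Real.sSup_nonneg
    rintro x ⟨m, -, rfl⟩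
    exact norm_nonneg _
  -- key 1 : every character at infinity is bounded by the sup over ρ > R
  have key1 : ∀ (R : ℝ) (m : characterSpace ℂ S), m ∉ Set.range ev →
      ‖(m : WeakDual ℂ S) a‖ ≤ sSup (SR R) := by
    intro R m hm
    have hKR : IsCompact (ρ ⁻¹' Set.Iic R) := by
      have hpre : ρ ⁻¹' Set.Iic R = ρ ⁻¹' Set.Icc 0 R := by
        ext y
        simp only [Set.mem_preimage, Set.mem_Iic, Set.mem_Icc]
        exact ⟨fun hy => ⟨hρ_nonneg y, hy⟩, fun hy => hy.2⟩
      rw [hpre]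
      exact hρ_proper.isCompact_preimage isCompact_Icc
    obtain ⟨g, hg1, hgle, hgsupp⟩ := exists_c0_one_on hKR
    have hmul_supp : HasCompactSupport fun y => g y * (a : BoundedContinuousFunction Y ℂ) y := by
      exact hgsupp.mul_right
    set p : ZeroAtInftyContinuousMap Y ℂ :=
      ⟨⟨fun y => g y * (a : BoundedContinuousFunction Y ℂ) y,
        (map_continuous g).mul (a : BoundedContinuousFunction Y ℂ).continuous⟩,
        hmul_supp.is_zero_at_infty⟩ with hpdef
    set pS : S := ⟨p.toBCF, hS_zero p⟩ with hpSdef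
    have hp0 : (m : WeakDual ℂ S) pS = 0 := char_kills_c0 hS_closed hS_zero hev hm p
    have hma : (m : WeakDual ℂ S) a = m (a - pS) := by
      rw [map_sub]
      show _ = _ - (m : WeakDual ℂ S) pS
      rw [hp0, sub_zero]
      rfl
    rw [hma]
    have hb1 : ‖m (a - pS)‖ ≤ ‖((a - pS : S) : BoundedContinuousFunction Y ℂ)‖ :=
      char_norm_le hS_closed m (a - pS)
    refine le_trans hb1 ?_
    apply (norm_le (hSR0 R)).mpr
    intro y
    have hval : ((a - pS : S) : BoundedContinuousFunction Y ℂ) y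
        = (1 - g y) * (a : BoundedContinuousFunction Y ℂ) y := by
      rw [AddSubgroupClass.coe_sub, BoundedContinuousFunction.sub_apply]
      rw [hpSdef]
      show (a : BoundedContinuousFunction Y ℂ) y - p.toBCF y = _
      rw [hpdef]
      show (a : BoundedContinuousFunction Y ℂ) y
        - g y * (a : BoundedContinuousFunction Y ℂ) y = _
      ring
    rw [hval]
    by_cases hyR : ρ y ≤ R
    · have : g y = 1 := hg1 y hyR
      rw [this]
      simp [hSR0 R]
    · push_neg at hyR
      rw [norm_mul]
      have h1 : ‖1 - g y‖ ≤ 1 := by exact hgle y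
      have h2 : ‖(a : BoundedContinuousFunction Y ℂ) y‖ ≤ sSup (SR R) := by
        exact le_csSup (hbddR R) ⟨y, hyR, rfl⟩
      calc ‖1 - g y‖ * ‖(a : BoundedContinuousFunction Y ℂ) y‖
          ≤ 1 * sSup (SR R) := mul_le_mul h1 h2 (norm_nonneg _) zero_le_one
        _ = sSup (SR R) := one_mul _
  have hLle : ∀ R, sSup SL ≤ sSup (SR R) := by
    intro R
    apply Real.sSup_le _ (hSR0 R)
    rintro x ⟨m, hm, rfl⟩
    exact key1 R m hm
  have hanti : ∀ R1 R2 : ℝ, R1 ≤ R2 → sSup (SR R2) ≤ sSup (SR R1) := by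
    intro R1 R2 h12
    apply Real.sSup_le _ (hSR0 R1)
    rintro x ⟨y, hy, rfl⟩
    exact le_csSup (hbddR R1) ⟨y, lt_of_le_of_lt h12 hy, rfl⟩
  -- key 2 : eventually below sSup SL + ε
  have key2 : ∀ ε : ℝ, 0 < ε → ∃ R : ℝ, sSup (SR R) ≤ sSup SL + ε := by
    intro ε hε
    by_contra hcon
    push_neg at hcon
    have hpt : ∀ R : ℝ, ∃ y, ρ y > R ∧
        sSup SL + ε ≤ ‖(a : BoundedContinuousFunction Y ℂ) y‖ := by
      intro R
      have hne : (SR R).Nonempty := by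
        by_contra hemp
        rw [Set.not_nonempty_iff_eq_empty] at hemp
        have := hcon R
        rw [hemp, Real.sSup_empty] at this
        linarith
      obtain ⟨x, hxmem, hx⟩ := exists_lt_of_lt_csSup hne (hcon R)
      obtain ⟨y, hy, rfl⟩ := hxmem
      exact ⟨y, hy, hx.le⟩
    set F : Filter Y := comap ρ atTop ⊓ 𝓟 {y | sSup SL + ε ≤
      ‖(a : BoundedContinuousFunction Y ℂ) y‖} with hFdef
    haveI hFne : F.NeBot := by
      rw [hFdef, inf_principal_neBot_iff]
      intro U hU
      rw [mem_comap] at hU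
      obtain ⟨t, ht, hsub⟩ := hU
      rw [mem_atTop_sets] at ht
      obtain ⟨R, hR⟩ := ht
      obtain ⟨y, hy1, hy2⟩ := hpt R
      exact ⟨y, hsub (by exact hR _ hy1.le), hy2⟩
    set U : Ultrafilter Y := Ultrafilter.of F with hUdef
    have hUF : (U : Filter Y) ≤ F := Ultrafilter.of_le F
    obtain ⟨m₀, -, hm₀⟩ := isCompact_univ.ultrafilter_le_nhds (Ultrafilter.map ev U)
      (by simp)
    have htend : ∀ fS : S, Tendsto (fun y => (fS : BoundedContinuousFunction Y ℂ) y)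
        (U : Filter Y) (𝓝 ((m₀ : WeakDual ℂ S) fS)) := by
      intro fS
      have h1 : Tendsto ev (U : Filter Y) (𝓝 m₀) := by
        rw [Tendsto, ← Ultrafilter.coe_map]
        exact hm₀
      have h2 : Continuous fun φ : characterSpace ℂ S => (φ : WeakDual ℂ S) fS :=
        (WeakDual.eval_continuous fS).comp continuous_subtype_val
      have h3 := (h2.tendsto m₀).comp h1
      exact h3.congr fun y => hev y fS
    have hcoc : comap ρ atTop ≤ cocompact Y := by
      intro s hs
      rw [mem_cocompact] at hs
      obtain ⟨K, hK, hKs⟩ := hs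
      obtain ⟨B, hB⟩ := (hK.image hρ_proper.continuous).bddAbove
      rw [mem_comap]
      refine ⟨Set.Ici (B + 1), Ici_mem_atTop _, fun y hy => hKs ?_⟩
      intro hyK
      have h1 : ρ y ≤ B := hB (Set.mem_image_of_mem ρ hyK)
      have h2 : B + 1 ≤ ρ y := hy
      linarith
    have hUcoc : (U : Filter Y) ≤ cocompact Y := le_trans (hUF.trans inf_le_left) hcoc
    have hm₀not : m₀ ∉ Set.range ev := by
      rintro ⟨y₀, hy₀⟩
      obtain ⟨g, hg1, -, -⟩ := exists_c0_one_on (isCompact_singleton (x := y₀))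
      set fS : S := ⟨g.toBCF, hS_zero g⟩ with hfSdef
      have h1 : Tendsto (fun y => (fS : BoundedContinuousFunction Y ℂ) y)
          (U : Filter Y) (𝓝 ((m₀ : WeakDual ℂ S) fS)) := htend fS
      have h2 : Tendsto (fun y => (fS : BoundedContinuousFunction Y ℂ) y)
          (U : Filter Y) (𝓝 0) := by
        have h3 := (zero_at_infty g).mono_left hUcoc
        exact h3.congr fun y => rfl
      have h4 : (m₀ : WeakDual ℂ S) fS = 0 := tendsto_nhds_unique h1 h2
      have h5 : (m₀ : WeakDual ℂ S) fS = 1 := by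
        rw [← hy₀, hev y₀ fS]
        show g.toBCF y₀ = 1
        exact hg1 y₀ rfl
      rw [h4] at h5
      exact one_ne_zero h5.symm
    have h3 : Tendsto (fun y => ‖(a : BoundedContinuousFunction Y ℂ) y‖)
        (U : Filter Y) (𝓝 (‖(m₀ : WeakDual ℂ S) a‖)) :=
      (continuous_norm.tendsto _).comp (htend a)
    have h4 : ∀ᶠ y in (U : Filter Y),
        sSup SL + ε ≤ ‖(a : BoundedContinuousFunction Y ℂ) y‖ :=
      hUF (mem_inf_of_right (mem_principal_self _))
    have h5 : sSup SL + ε ≤ ‖(m₀ : WeakDual ℂ S) a‖ := ge_of_tendsto h3 h4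
    have h6 : ‖(m₀ : WeakDual ℂ S) a‖ ≤ sSup SL :=
      le_csSup hbddL ⟨m₀, hm₀not, rfl⟩
    linarith
  -- conclusion
  rw [Metric.tendsto_atTop]
  intro ε hε
  obtain ⟨R₀, hR₀⟩ := key2 (ε / 2) (by linarith)
  refine ⟨R₀, fun R hR => ?_⟩
  have h1 : sSup SL ≤ sSup (SR R) := hLle R
  have h2 : sSup (SR R) ≤ sSup SL + ε / 2 := le_trans (hanti R₀ R hR) hR₀
  rw [Real.dist_eq, abs_of_nonneg (by linarith)]
  linarith
end
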